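/- arXiv:1610.06474 — 4 statements merged into one kernel-verified Lean document; each statement's English description precedes it below -/
import Mathlib

section
/- Let $\nu$ be a Borel probability measure on $\mathbb{R}^d$, let $r>0$ and let $\lambda_1,\dots,\lambda_d, M \geq 1$. Then the $\nu$-measure of the set of points $x \in \mathbb{R}^d$ such that $\nu(D(x,\lambda_1 r,\dots,\lambda_d r)) \geq M\,\nu(D(x,r))$ is at most $4^d M^{-1} \lambda_1 \cdots \lambda_d$. -/
open MeasureTheory Set
open scoped ENNReal

/-!
Tile `ℝ^d` by half-open grid cubes of side `r`. In each cube meeting the set `A` in question pick a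
point `x ∈ A`; the cube lies in `D(x, r)`, so `M ν(A ∩ cube) ≤ ν(D(x, λr))`. Summing over cubes,
`M ν(A)` is at most the total mass of these dilated boxes, and every point lies in at most
`∏ i, (2λᵢ + 2) ≤ 4^d ∏ i, λᵢ` of them, since their centres lie in distinct cubes.
-/

lemma tsum_measure_le_mul_measure_univ_of_forall_card_le {α ι : Type*} [MeasurableSpace α]
    [Countable ι] (μ : Measure α) {B : ι → Set α} (hB : ∀ n, MeasurableSet (B n)) {K : ℝ≥0∞}
    (hK : ∀ y, ∃ s : Finset ι, (∀ n, y ∈ B n → n ∈ s) ∧ (s.card : ℝ≥0∞) ≤ K) :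
    ∑' n, μ (B n) ≤ K * μ univ := by
  have hpt : ∀ y, ∑' n, (B n).indicator (1 : α → ℝ≥0∞) y ≤ K := by
    intro y
    obtain ⟨s, hs, hsK⟩ := hK y
    calc ∑' n, (B n).indicator (1 : α → ℝ≥0∞) y ≤ ∑' n, (s : Set ι).indicator 1 n := by
          refine ENNReal.tsum_le_tsum fun n => ?_
          by_cases hy : y ∈ B n
          · simp [hy, hs n hy]
          · simp [hy]
      _ = (s.card : ℝ≥0∞) := by simp [← tsum_subtype]
      _ ≤ K := hsK
  calc ∑' n, μ (B n) = ∫⁻ y, ∑' n, (B n).indicator 1 y ∂μ := by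
        rw [lintegral_tsum fun n => (measurable_one.indicator (hB n)).aemeasurable]
        simp_rw [lintegral_indicator_one (hB _)]
    _ ≤ ∫⁻ _, K ∂μ := lintegral_mono hpt
    _ = K * μ univ := lintegral_const K

lemma card_Icc_ceil_floor_le {a b : ℝ} (hab : a ≤ b + 1) :
    ((Finset.Icc ⌈a⌉ ⌊b⌋).card : ℝ) ≤ b - a + 1 := by
  have hcast : ((Finset.Icc ⌈a⌉ ⌊b⌋).card : ℝ) = max ((⌊b⌋ + 1 - ⌈a⌉ : ℤ) : ℝ) 0 := by
    rw [Int.card_Icc, ← Int.cast_natCast, Int.toNat_eq_max]; push_cast; rfl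
  rw [hcast]
  exact max_le (by push_cast; linarith [Int.floor_le b, Int.le_ceil a]) (by linarith)

section Grid

variable {ι : Type*}

def closedBox (x h : ι → ℝ) : Set (ι → ℝ) := univ.pi fun i => Icc (x i - h i) (x i + h i)

def gridCell (r : ℝ) (n : ι → ℤ) : Set (ι → ℝ) := univ.pi fun i => Ico (n i * r) ((n i + 1) * r)

lemma mem_gridCell_floor {r : ℝ} (hr : 0 < r) (x : ι → ℝ) :
    x ∈ gridCell r (fun i => ⌊x i / r⌋) := by
  intro i _
  constructor
  · calc (⌊x i / r⌋ : ℝ) * r ≤ x i / r * r := by gcongr; exact Int.floor_le _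
      _ = x i := div_mul_cancel₀ _ hr.ne'
  · calc x i = x i / r * r := (div_mul_cancel₀ _ hr.ne').symm
      _ < (⌊x i / r⌋ + 1) * r := by gcongr; exact Int.lt_floor_add_one _

lemma gridCell_subset_closedBox {r : ℝ} {n : ι → ℤ} {x : ι → ℝ} (hx : x ∈ gridCell r n) :
    gridCell r n ⊆ closedBox x fun _ => r := by
  intro y hy i _
  obtain ⟨hx₁, hx₂⟩ := hx i (mem_univ i)
  obtain ⟨hy₁, hy₂⟩ := hy i (mem_univ i)
  constructor <;> linarith

variable [Fintype ι]

lemma measurableSet_closedBox (x h : ι → ℝ) : MeasurableSet (closedBox x h) :=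
  MeasurableSet.univ_pi fun _ => measurableSet_Icc

variable [DecidableEq ι]

/-- Contains every `n` such that `y ∈ closedBox x h` for some `x ∈ gridCell r n`. -/
noncomputable def gridIndicesNear (r : ℝ) (y h : ι → ℝ) : Finset (ι → ℤ) :=
  Fintype.piFinset fun i => Finset.Icc ⌈(y i - h i) / r - 1⌉ ⌊(y i + h i) / r⌋

lemma mem_gridIndicesNear {r : ℝ} (hr : 0 < r) {n : ι → ℤ} {x y h : ι → ℝ}
    (hx : x ∈ gridCell r n) (hy : y ∈ closedBox x h) : n ∈ gridIndicesNear r y h := by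
  rw [gridIndicesNear, Fintype.mem_piFinset]
  intro i
  obtain ⟨hx₁, hx₂⟩ := hx i (mem_univ i)
  obtain ⟨hy₁, hy₂⟩ := hy i (mem_univ i)
  rw [Finset.mem_Icc, Int.ceil_le, Int.le_floor, sub_le_iff_le_add, div_le_iff₀ hr,
    le_div_iff₀ hr]
  constructor <;> linarith

lemma card_gridIndicesNear_le {r : ℝ} (hr : 0 < r) (y : ι → ℝ) {h : ι → ℝ} (hh : ∀ i, 0 ≤ h i) :
    ((gridIndicesNear r y h).card : ℝ) ≤ ∏ i, (2 * h i / r + 2) := by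
  rw [gridIndicesNear, Fintype.card_piFinset, Nat.cast_prod]
  refine Finset.prod_le_prod (fun _ _ => Nat.cast_nonneg _) fun i _ => ?_
  have hhr : 0 ≤ h i / r := div_nonneg (hh i) hr.le
  calc _ ≤ (y i + h i) / r - ((y i - h i) / r - 1) + 1 := card_Icc_ceil_floor_le (by
          rw [sub_div, add_div]; linarith)
    _ = 2 * h i / r + 2 := by ring

lemma mul_measure_setOf_mul_measure_closedBox_le (ν : Measure (ι → ℝ)) {r : ℝ} (hr : 0 < r)
    {h : ι → ℝ} (hh : ∀ i, 0 ≤ h i) (M : ℝ≥0∞) :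
    M * ν {x | M * ν (closedBox x fun _ => r) ≤ ν (closedBox x h)} ≤
      ENNReal.ofReal (∏ i, (2 * h i / r + 2)) * ν univ := by
  classical
  set A := {x | M * ν (closedBox x fun _ => r) ≤ ν (closedBox x h)}
  set S := {n : ι → ℤ | (A ∩ gridCell r n).Nonempty}
  let c : S → ι → ℝ := fun n => n.2.some
  have hcA (n : S) : c n ∈ A := n.2.some_mem.1
  have hcQ (n : S) : c n ∈ gridCell r n := n.2.some_mem.2
  have hcover : A ⊆ ⋃ n : S, A ∩ gridCell r n := fun x hx =>
    mem_iUnion.2 ⟨⟨_, x, hx, mem_gridCell_floor hr x⟩, hx, mem_gridCell_floor hr x⟩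
  have hcell (n : S) : M * ν (A ∩ gridCell r n) ≤ ν (closedBox (c n) h) :=
    le_trans (by gcongr; exact inter_subset_right.trans (gridCell_subset_closedBox (hcQ n)))
      (hcA n)
  have hmult (y : ι → ℝ) : ∃ s : Finset S, (∀ n, y ∈ closedBox (c n) h → n ∈ s) ∧
      (s.card : ℝ≥0∞) ≤ ENNReal.ofReal (∏ i, (2 * h i / r + 2)) := by
    refine ⟨(gridIndicesNear r y h).subtype (· ∈ S),
      fun n hy => Finset.mem_subtype.2 (mem_gridIndicesNear hr (hcQ n) hy), ?_⟩
    rw [← ENNReal.ofReal_natCast]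
    refine ENNReal.ofReal_le_ofReal (le_trans ?_ (card_gridIndicesNear_le hr y hh))
    rw [Finset.card_subtype]
    exact_mod_cast Finset.card_filter_le _ _
  calc M * ν A ≤ M * ∑' n : S, ν (A ∩ gridCell r n) := by
        gcongr; exact (measure_mono hcover).trans (measure_iUnion_le _)
    _ = ∑' n : S, M * ν (A ∩ gridCell r n) := ENNReal.tsum_mul_left.symm
    _ ≤ ∑' n : S, ν (closedBox (c n) h) := ENNReal.tsum_le_tsum hcell
    _ ≤ _ := tsum_measure_le_mul_measure_univ_of_forall_card_le ν
        (fun _ => measurableSet_closedBox _ _) hmult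

end Grid

theorem stmt0 {d : ℕ} (ν : Measure (Fin d → ℝ)) [IsProbabilityMeasure ν]
    (r : ℝ) (hr : 0 < r) (lam : Fin d → ℝ) (hlam : ∀ i, 1 ≤ lam i)
    (M : ℝ) (hM : 1 ≤ M) :
    ν {x | ENNReal.ofReal M * ν (univ.pi fun i => Icc (x i - r) (x i + r)) ≤
        ν (univ.pi fun i => Icc (x i - lam i * r) (x i + lam i * r))} ≤
      ENNReal.ofReal (4 ^ d * M⁻¹ * ∏ i, lam i) := by
  have hM₀ : 0 < M := zero_lt_one.trans_le hM
  have hcount : ∏ i, (2 * (lam i * r) / r + 2) ≤ 4 ^ d * ∏ i, lam i := by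
    calc ∏ i, (2 * (lam i * r) / r + 2) = ∏ i, (2 * lam i + 2) := by
          congr! 2 with i; field_simp
      _ ≤ ∏ i, (4 * lam i) :=
          Finset.prod_le_prod (fun i _ => by linarith [hlam i]) fun i _ => by linarith [hlam i]
      _ = 4 ^ d * ∏ i, lam i := by simp [Finset.prod_mul_distrib]
  have key := mul_measure_setOf_mul_measure_closedBox_le ν hr
    (fun i => mul_nonneg (zero_le_one.trans (hlam i)) hr.le) (ENNReal.ofReal M)
  rw [measure_univ, mul_one, mul_comm] at key
  rw [show 4 ^ d * M⁻¹ * ∏ i, lam i = (4 ^ d * ∏ i, lam i) / M by ring,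
    ENNReal.ofReal_div_of_pos hM₀,
    ENNReal.le_div_iff_mul_le (.inl (by simpa using hM₀)) (.inl ENNReal.ofReal_ne_top)]
  exact key.trans (ENNReal.ofReal_le_ofReal hcount)
end

section
/- Let $0<a<1$ and $\varepsilon>0$. There exists a constant $c_0=c_0(a,\varepsilon,d)$ such that for every Borel probability measure $\nu$ on $\mathbb{R}^d$ and every $0<r_0\leq 1/2$, the $\nu$-measure of the set of points $x$ for which there exist $r$ and $h_1,\dots,h_d$ with $0<r<r_0$ and $h_i\geq r^a$ for all $i$ such that $\nu(D(x,h_1,\dots,h_d)) > \prod_{i=1}^d (4h_i/r)^{1+\varepsilon}\,\nu(D(x,r))$, is at most $c_0\, r_0^{d\varepsilon(1-a)}$. -/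
/-!
Cut space into half-open cubes of side `s`. If a point `x` of such a cell `Q` satisfies
`K ν(D(x,s)) < ν(D(x,s n))`, then `K ν(Q) ≤ K ν(D(x,s)) < ν(D(x,s n))`, and `D(x,s n)` is covered by
the `∏ (2 nᵢ + 1)` translates `Q + s t`, `|tᵢ| ≤ nᵢ`. Summing over all cells, where every cell is
counted `∏ (2 nᵢ + 1)` times, the exceptional set for fixed `s, n, K` has measure at most
`∏ (2 nᵢ + 1) / K`.

A point of the set in the theorem, with radius `r` and half-sides `h`, lies in such an exceptional set
with dyadic `s = 2^-m ≈ r`, `nᵢ = 2^kᵢ ≈ hᵢ / s` and `K = ∏ nᵢ^(1+ε)`, whose measure is then at most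
`3^d ∏ nᵢ^-ε`. Since `hᵢ ≥ r^a`, `2^kᵢ ≥ s^(a-1)`; summing the geometric series first over the `kᵢ`
gives `≲ s^(dε(1-a))` per scale, and summing over the scales `s < r₀` gives `≲ r₀^(dε(1-a))`.
-/

open MeasureTheory Set

open scoped ENNReal

section

variable {ι : Type*}

/-- The paper's `D(x, h₁, …, h_d)`; the cube `D(x, r)` is `box x fun _ => r`. -/
def box (x h : ι → ℝ) : Set (ι → ℝ) :=
  univ.pi fun i => Icc (x i - h i) (x i + h i)

theorem box_mono {x h h' : ι → ℝ} (hh : h ≤ h') : box x h ⊆ box x h' :=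
  pi_mono fun i _ => Icc_subset_Icc (by linarith [hh i]) (by linarith [hh i])

def cell (s : ℝ) (c : ι → ℤ) : Set (ι → ℝ) :=
  univ.pi fun i => Ico (s * c i) (s * (c i + 1))

variable {s : ℝ}

theorem mem_cell_iff (hs : 0 < s) {y : ι → ℝ} {c : ι → ℤ} :
    y ∈ cell s c ↔ ∀ i, ⌊y i / s⌋ = c i := by
  simp only [cell, mem_univ_pi, mem_Ico, Int.floor_eq_iff, le_div_iff₀ hs, div_lt_iff₀ hs,
    mul_comm s]

theorem tsum_measure_cell [Finite ι] (ν : Measure (ι → ℝ)) (hs : 0 < s) :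
    ∑' c, ν (cell s c) = ν univ := by
  have hdisj : Pairwise (Function.onFun Disjoint (cell (ι := ι) s)) := fun c c' hcc' =>
    disjoint_left.2 fun y hy hy' => hcc' <| funext fun i =>
      ((mem_cell_iff hs).1 hy i).symm.trans ((mem_cell_iff hs).1 hy' i)
  have hcover : (⋃ c, cell (ι := ι) s c) = univ :=
    eq_univ_of_forall fun y => mem_iUnion.2 ⟨fun i => ⌊y i / s⌋, (mem_cell_iff hs).2 fun _ => rfl⟩
  rw [← measure_iUnion hdisj fun c => MeasurableSet.univ_pi fun i => measurableSet_Ico, hcover]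

theorem cell_subset_box {x : ι → ℝ} {c : ι → ℤ} (hx : x ∈ cell s c) :
    cell s c ⊆ box x fun _ => s := fun y hy i _ => by
  obtain ⟨hx_lo, hx_hi⟩ := hx i trivial
  obtain ⟨hy_lo, hy_hi⟩ := hy i trivial
  exact ⟨by linarith, by linarith⟩

theorem box_subset_biUnion_cell [Fintype ι] [DecidableEq ι] (hs : 0 < s) (n : ι → ℕ)
    {x : ι → ℝ} {c : ι → ℤ} (hx : x ∈ cell s c) :
    (box x fun i => s * n i) ⊆ ⋃ t ∈ Finset.Icc (-fun i => (n i : ℤ)) fun i => (n i : ℤ),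
      cell s (c + t) := by
  intro y hy
  rw [mem_cell_iff hs] at hx
  refine mem_iUnion₂.2 ⟨fun i => ⌊y i / s⌋ - c i, Finset.mem_Icc.2 ⟨fun i => ?_, fun i => ?_⟩,
    (mem_cell_iff hs).2 fun i => by simp⟩
  all_goals
    obtain ⟨hlo, hhi⟩ := hy i trivial
    simp only [Pi.neg_apply, ← hx i] at hlo hhi ⊢
  · have : x i / s - n i ≤ y i / s := by
      rw [div_sub' hs.ne', div_le_div_iff_of_pos_right hs]; linarith
    have := Int.floor_mono this
    rw [Int.floor_sub_natCast] at this
    omega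
  · have : y i / s ≤ x i / s + n i := by
      rw [div_add' _ _ _ hs.ne', div_le_div_iff_of_pos_right hs]; linarith
    have := Int.floor_mono this
    rw [Int.floor_add_natCast] at this
    omega

def exceptionalSet (ν : Measure (ι → ℝ)) (K : ℝ≥0∞) (s : ℝ) (h : ι → ℝ) : Set (ι → ℝ) :=
  {x | K * ν (box x fun _ => s) < ν (box x h)}

theorem exceptionalSet_subset_exceptionalSet {ν : Measure (ι → ℝ)} {K K' : ℝ≥0∞} {r : ℝ}
    {h h' : ι → ℝ} (hK : K ≤ K') (hsr : s ≤ r) (hh : h ≤ h') :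
    exceptionalSet ν K' r h ⊆ exceptionalSet ν K s h' := fun x hx =>
  calc K * ν (box x fun _ => s) ≤ K' * ν (box x fun _ => r) :=
        mul_le_mul' hK (measure_mono (box_mono fun _ => hsr))
    _ < ν (box x h) := hx
    _ ≤ ν (box x h') := measure_mono (box_mono hh)

theorem mul_measure_exceptionalSet_le [Fintype ι] [DecidableEq ι] (ν : Measure (ι → ℝ))
    (K : ℝ≥0∞) (hs : 0 < s) (n : ι → ℕ) :
    K * ν (exceptionalSet ν K s fun i => s * n i) ≤ (∏ i, (2 * n i + 1 : ℝ≥0∞)) * ν univ := by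
  set E := exceptionalSet ν K s fun i => s * n i
  set T := Finset.Icc (-fun i => (n i : ℤ)) fun i => (n i : ℤ)
  have hcell : ∀ c, K * ν (E ∩ cell s c) ≤ ∑ t ∈ T, ν (cell s (c + t)) := by
    intro c
    rcases (E ∩ cell s c).eq_empty_or_nonempty with he | ⟨x, hxE, hxc⟩
    · simp [he]
    calc K * ν (E ∩ cell s c) ≤ K * ν (box x fun _ => s) :=
          mul_le_mul_right (measure_mono (inter_subset_right.trans (cell_subset_box hxc))) _
      _ ≤ ν (box x fun i => s * n i) := hxE.le
      _ ≤ ν (⋃ t ∈ T, cell s (c + t)) := measure_mono (box_subset_biUnion_cell hs n hxc)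
      _ ≤ ∑ t ∈ T, ν (cell s (c + t)) := measure_biUnion_finset_le _ _
  have hcard : (T.card : ℝ≥0∞) = ∏ i, (2 * n i + 1 : ℝ≥0∞) := by
    rw [Pi.card_Icc, Nat.cast_prod]
    refine Finset.prod_congr rfl fun i _ => ?_
    rw [Int.card_Icc, Pi.neg_apply, show ((n i : ℤ) + 1 - -(n i : ℤ)).toNat = 2 * n i + 1 by omega]
    push_cast
    rfl
  calc K * ν E ≤ K * ∑' c, ν (E ∩ cell s c) := by
        gcongr
        refine (measure_mono fun y hy => ?_).trans (measure_iUnion_le _)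
        exact mem_iUnion.2 ⟨fun i => ⌊y i / s⌋, hy, (mem_cell_iff hs).2 fun _ => rfl⟩
    _ = ∑' c, K * ν (E ∩ cell s c) := ENNReal.tsum_mul_left.symm
    _ ≤ ∑' c, ∑ t ∈ T, ν (cell s (c + t)) := ENNReal.tsum_le_tsum hcell
    _ = ∑ t ∈ T, ∑' c, ν (cell s (c + t)) := Summable.tsum_finsetSum fun _ _ => ENNReal.summable
    _ = ∑ _t ∈ T, ν univ := Finset.sum_congr rfl fun t _ => by
        rw [← tsum_measure_cell ν hs]; exact (Equiv.addRight t).tsum_eq fun c => ν (cell s c)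
    _ = (∏ i, (2 * n i + 1 : ℝ≥0∞)) * ν univ := by rw [Finset.sum_const, nsmul_eq_mul, hcard]

theorem measure_exceptionalSet_rpow_le [Fintype ι] [DecidableEq ι] (ν : Measure (ι → ℝ))
    (hs : 0 < s) (ε : ℝ) {n : ι → ℕ} (hn : ∀ i, 1 ≤ n i) :
    ν (exceptionalSet ν (∏ i, ENNReal.ofReal ((n i : ℝ) ^ (1 + ε))) s fun i => s * n i) ≤
      ENNReal.ofReal (∏ i, 3 * (n i : ℝ) ^ (-ε)) * ν univ := by
  set K := ∏ i, ENNReal.ofReal ((n i : ℝ) ^ (1 + ε))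
  have hn1 : ∀ i, (1 : ℝ) ≤ n i := fun i => by exact_mod_cast hn i
  have hn0 : ∀ i, (0 : ℝ) < n i := fun i => one_pos.trans_le (hn1 i)
  have hK0 : K ≠ 0 := Finset.prod_ne_zero_iff.2 fun i _ =>
    (ENNReal.ofReal_pos.2 (Real.rpow_pos_of_pos (hn0 i) _)).ne'
  have hKtop : K ≠ ⊤ := ENNReal.prod_ne_top fun _ _ => ENNReal.ofReal_ne_top
  have hcount : (∏ i, (2 * n i + 1 : ℝ≥0∞)) ≤ K * ENNReal.ofReal (∏ i, 3 * (n i : ℝ) ^ (-ε)) := by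
    rw [ENNReal.ofReal_prod_of_nonneg fun i _ => by positivity, ← Finset.prod_mul_distrib]
    refine Finset.prod_le_prod' fun i _ => ?_
    have hweight : (n i : ℝ) ^ (1 + ε) * (3 * (n i : ℝ) ^ (-ε)) = 3 * n i := by
      have := (Real.rpow_pos_of_pos (hn0 i) ε).ne'
      rw [Real.rpow_add (hn0 i), Real.rpow_neg (hn0 i).le, Real.rpow_one]
      field_simp
    rw [← ENNReal.ofReal_mul (by positivity), hweight,
      show (2 * n i + 1 : ℝ≥0∞) = ENNReal.ofReal (2 * n i + 1) by norm_cast]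
    exact ENNReal.ofReal_le_ofReal (by linarith [hn1 i])
  rw [← ENNReal.mul_le_mul_iff_right hK0 hKtop, ← mul_assoc]
  exact (mul_measure_exceptionalSet_le ν K hs n).trans (by gcongr)

end

theorem exists_two_pow_mul_mem_Icc {s h : ℝ} (hs : 0 < s) (hsh : s ≤ h) :
    ∃ k : ℕ, h ≤ s * 2 ^ k ∧ s * 2 ^ k ≤ 2 * h := by
  obtain ⟨k, hk_le, hk_lt⟩ := exists_nat_pow_near ((one_le_div hs).2 hsh) one_lt_two
  rw [le_div_iff₀ hs] at hk_le
  rw [div_lt_iff₀ hs] at hk_lt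
  exact ⟨k + 1, by linarith, by rw [pow_succ]; linarith⟩

theorem exists_inv_two_pow_le_le {r : ℝ} (hr0 : 0 < r) (hr1 : r ≤ 1) :
    ∃ m : ℕ, ((2 : ℝ) ^ m)⁻¹ ≤ r ∧ r ≤ 2 * ((2 : ℝ) ^ m)⁻¹ := by
  obtain ⟨m, hm_le, hm_lt⟩ := exists_nat_pow_near (one_le_inv₀ hr0 |>.2 hr1) one_lt_two
  refine ⟨m + 1, (inv_le_comm₀ (by positivity) hr0).2 hm_lt.le, ?_⟩
  rw [pow_succ, mul_inv, mul_left_comm, mul_inv_cancel₀ two_ne_zero, mul_one]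
  exact (le_inv_comm₀ hr0 (by positivity)).2 hm_le

theorem exists_dyadic_mem_exceptionalSet {ι : Type*} [Fintype ι] {ν : Measure (ι → ℝ)}
    {a ε r : ℝ} {h x : ι → ℝ} (ha0 : 0 < a) (ha1 : a ≤ 1) (hε : 0 ≤ 1 + ε) (hr0 : 0 < r)
    (hr1 : r ≤ 1) (hrh : ∀ i, r ^ a ≤ h i)
    (hx : x ∈ exceptionalSet ν (∏ i, ENNReal.ofReal ((4 * h i / r) ^ (1 + ε))) r h) :
    ∃ m : ℕ, ∃ k : ι → ℕ, ((2 : ℝ) ^ m)⁻¹ ≤ r ∧ (∀ i, ((2 : ℝ) ^ m) ^ (1 - a) ≤ 2 ^ k i) ∧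
      x ∈ exceptionalSet ν (∏ i, ENNReal.ofReal (((2 ^ k i : ℕ) : ℝ) ^ (1 + ε)))
        ((2 : ℝ) ^ m)⁻¹ fun i => ((2 : ℝ) ^ m)⁻¹ * (2 ^ k i : ℕ) := by
  obtain ⟨m, hsr, hrs⟩ := exists_inv_two_pow_le_le hr0 hr1
  set s := ((2 : ℝ) ^ m)⁻¹
  have hs : 0 < s := by positivity
  have hrh' : ∀ i, r ≤ h i := fun i =>
    (Real.rpow_one r ▸ Real.rpow_le_rpow_of_exponent_ge hr0 hr1 ha1).trans (hrh i)
  choose k hk_le hk_ge using fun i => exists_two_pow_mul_mem_Icc hs (hsr.trans (hrh' i))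
  have hk_pos : ∀ i, 0 < h i := fun i => hr0.trans_le (hrh' i)
  refine ⟨m, k, hsr, fun i => ?_, exceptionalSet_subset_exceptionalSet ?_ hsr (fun i => ?_) hx⟩
  · calc ((2 : ℝ) ^ m) ^ (1 - a) = s ^ a / s := by
          rw [Real.rpow_sub (by positivity), Real.rpow_one, Real.inv_rpow (by positivity)]
          simp [s, div_eq_mul_inv, mul_comm]
      _ ≤ r ^ a / s := by gcongr
      _ ≤ h i / s := by gcongr; exact hrh i
      _ ≤ 2 ^ k i := by rw [div_le_iff₀ hs]; linarith [hk_le i]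
  · refine Finset.prod_le_prod' fun i _ => ENNReal.ofReal_le_ofReal <|
      Real.rpow_le_rpow (by positivity) ?_ hε
    push_cast
    rw [le_div_iff₀ hr0]
    nlinarith [hk_ge i, hk_pos i]
  · push_cast
    linarith [hk_le i]

theorem ENNReal.tsum_prod_apply_le_prod_tsum {ι κ : Type*} [Fintype ι] (g : ι → κ → ℝ≥0∞) :
    ∑' k : ι → κ, ∏ i, g i (k i) ≤ ∏ i, ∑' j, g i j := by
  classical
  rw [ENNReal.tsum_eq_iSup_sum]
  refine iSup_le fun S => ?_
  calc ∑ k ∈ S, ∏ i, g i (k i)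
      ≤ ∑ k ∈ Fintype.piFinset fun i => S.image (· i), ∏ i, g i (k i) :=
        Finset.sum_le_sum_of_subset fun k hk =>
          Fintype.mem_piFinset.2 fun i => Finset.mem_image_of_mem _ hk
    _ = ∏ i, ∑ j ∈ S.image (· i), g i j := (Finset.prod_univ_sum _ _).symm
    _ ≤ ∏ i, ∑' j, g i j := Finset.prod_le_prod' fun i _ => ENNReal.sum_le_tsum _

theorem tsum_two_pow_rpow_neg_le {ε t C : ℝ} (hε : 0 < ε) (ht : 0 < t) (hC : 0 ≤ C) :
    ∑' k : {k : ℕ | t ≤ 2 ^ k}, ENNReal.ofReal (C * ((2 : ℝ) ^ (k : ℕ)) ^ (-ε)) ≤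
      ENNReal.ofReal (C * t ^ (-ε) / (1 - 2 ^ (-ε))) := by
  set ρ : ℝ := 2 ^ (-ε)
  have hρ0 : 0 < ρ := by positivity
  have hρ1 : ρ < 1 := Real.rpow_lt_one_of_one_lt_of_neg one_lt_two (neg_neg_of_pos hε)
  have hpow : ∀ k : ℕ, ((2 : ℝ) ^ k) ^ (-ε) = ρ ^ k := fun k => by
    rw [← Real.rpow_natCast, ← Real.rpow_natCast, ← Real.rpow_mul zero_le_two,
      ← Real.rpow_mul zero_le_two, mul_comm]
  have hex : ∃ k : ℕ, t ≤ 2 ^ k := (pow_unbounded_of_one_lt t one_lt_two).imp fun _ => le_of_lt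
  set J := Nat.find hex
  have hJ : ∀ k : {k : ℕ | t ≤ 2 ^ k}, J ≤ k := fun k => Nat.find_min' hex k.2
  have hinj : Function.Injective fun k : {k : ℕ | t ≤ 2 ^ k} => (k : ℕ) - J := fun k l hkl =>
    Subtype.ext <| by have := hJ k; have := hJ l; simp only at hkl; omega
  set G : ℕ → ℝ≥0∞ := fun i => ENNReal.ofReal (C * ρ ^ J) * ENNReal.ofReal ρ ^ i
  calc ∑' k : {k : ℕ | t ≤ 2 ^ k}, ENNReal.ofReal (C * ((2 : ℝ) ^ (k : ℕ)) ^ (-ε))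
      = ∑' k : {k : ℕ | t ≤ 2 ^ k}, G (k - J) := tsum_congr fun k => by
        rw [hpow, ← Nat.add_sub_cancel' (hJ k), pow_add, Nat.add_sub_cancel_left]
        simp only [G]
        rw [← ENNReal.ofReal_pow hρ0.le, ← ENNReal.ofReal_mul (by positivity), mul_assoc]
    _ ≤ ∑' i, G i := ENNReal.tsum_comp_le_tsum_of_injective hinj G
    _ = ENNReal.ofReal (C * ρ ^ J / (1 - ρ)) := by
        rw [ENNReal.tsum_mul_left, ENNReal.tsum_geometric, ← ENNReal.ofReal_one,
          ← ENNReal.ofReal_sub _ hρ0.le, ← ENNReal.ofReal_inv_of_pos (by linarith),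
          ← ENNReal.ofReal_mul (by positivity), div_eq_mul_inv]
    _ ≤ ENNReal.ofReal (C * t ^ (-ε) / (1 - ρ)) := by
        refine ENNReal.ofReal_le_ofReal <|
          div_le_div_of_nonneg_right (mul_le_mul_of_nonneg_left ?_ hC) (by linarith)
        rw [← hpow]
        exact Real.rpow_le_rpow_of_nonpos ht (Nat.find_spec hex) (neg_nonpos.2 hε.le)

theorem tsum_pi_two_pow_rpow_neg_le {ι : Type*} [Fintype ι] {ε t C : ℝ}
    (hε : 0 < ε) (ht : 0 < t) (hC : 0 ≤ C) :
    ∑' k : {k : ι → ℕ | ∀ i, t ≤ 2 ^ k i},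
        ENNReal.ofReal (∏ i, C * ((2 : ℝ) ^ (k : ι → ℕ) i) ^ (-ε)) ≤
      ENNReal.ofReal ((C * t ^ (-ε) / (1 - 2 ^ (-ε))) ^ Fintype.card ι) := by
  set f : ℕ → ℝ≥0∞ := {k | t ≤ 2 ^ k}.indicator fun k => ENNReal.ofReal (C * ((2 : ℝ) ^ k) ^ (-ε))
  have hprod : ∀ k : ι → ℕ, {k : ι → ℕ | ∀ i, t ≤ 2 ^ k i}.indicator
      (fun k => ENNReal.ofReal (∏ i, C * ((2 : ℝ) ^ k i) ^ (-ε))) k = ∏ i, f (k i) := fun k => by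
    simp only [f, indicator_apply, mem_ofPred_eq, Fintype.prod_ite_zero]
    rw [ENNReal.ofReal_prod_of_nonneg fun i _ => by positivity]
  have hρ1 : (2 : ℝ) ^ (-ε) < 1 := Real.rpow_lt_one_of_one_lt_of_neg one_lt_two (neg_neg_of_pos hε)
  rw [tsum_subtype _ fun k : ι → ℕ => ENNReal.ofReal (∏ i, C * ((2 : ℝ) ^ k i) ^ (-ε)),
    tsum_congr hprod, ENNReal.ofReal_pow (div_nonneg (by positivity) (sub_pos.2 hρ1).le),
    ← Finset.card_univ, ← Finset.prod_const]
  refine (ENNReal.tsum_prod_apply_le_prod_tsum fun _ => f).trans <|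
    Finset.prod_le_prod' fun _ _ => ?_
  rw [← tsum_subtype]
  exact tsum_two_pow_rpow_neg_le hε ht hC

theorem measure_le_tsum_dyadic {ι : Type*} [Fintype ι] [DecidableEq ι] (ν : Measure (ι → ℝ))
    [IsProbabilityMeasure ν] {a ε r0 : ℝ} (ha0 : 0 < a) (ha1 : a ≤ 1) (hε : 0 ≤ 1 + ε)
    (hr0 : 0 < r0) (hr01 : r0 ≤ 1) :
    ν {x | ∃ r : ℝ, ∃ h : ι → ℝ, 0 < r ∧ r < r0 ∧ (∀ i, r ^ a ≤ h i) ∧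
        x ∈ exceptionalSet ν (∏ i, ENNReal.ofReal ((4 * h i / r) ^ (1 + ε))) r h} ≤
      ∑' m : {m : ℕ | r0⁻¹ ≤ 2 ^ m},
        ∑' k : {k : ι → ℕ | ∀ i, ((2 : ℝ) ^ (m : ℕ)) ^ (1 - a) ≤ 2 ^ k i},
          ENNReal.ofReal (∏ i, 3 * ((2 : ℝ) ^ (k : ι → ℕ) i) ^ (-ε)) := by
  set piece : ℕ → (ι → ℕ) → Set (ι → ℝ) := fun m k =>
    exceptionalSet ν (∏ i, ENNReal.ofReal (((2 ^ k i : ℕ) : ℝ) ^ (1 + ε))) ((2 : ℝ) ^ m)⁻¹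
      fun i => ((2 : ℝ) ^ m)⁻¹ * (2 ^ k i : ℕ)
  set scales := {m : ℕ | r0⁻¹ ≤ 2 ^ m}
  set widths := fun m : ℕ => {k : ι → ℕ | ∀ i, ((2 : ℝ) ^ m) ^ (1 - a) ≤ 2 ^ k i}
  calc _ ≤ ν (⋃ m ∈ scales, ⋃ k ∈ widths m, piece m k) := by
        refine measure_mono fun x ⟨r, h, hr, hrr0, hrh, hx⟩ => ?_
        obtain ⟨m, k, hmr, hk, hxk⟩ :=
          exists_dyadic_mem_exceptionalSet ha0 ha1 hε hr (by linarith) hrh hx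
        have hm : m ∈ scales := (inv_le_comm₀ (pow_pos two_pos m) hr0).1 (hmr.trans hrr0.le)
        exact mem_iUnion₂.2 ⟨m, hm, mem_iUnion₂.2 ⟨k, hk, hxk⟩⟩
    _ ≤ ∑' m : scales, ∑' k : widths m, ν (piece m k) :=
        (measure_biUnion_le _ (to_countable _) _).trans <|
          ENNReal.tsum_le_tsum fun m => measure_biUnion_le _ (to_countable _) _
    _ ≤ _ := ENNReal.tsum_le_tsum fun m => ENNReal.tsum_le_tsum fun k => by
        simpa [piece] using measure_exceptionalSet_rpow_le ν (by positivity) ε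
          fun i => Nat.one_le_two_pow (n := (k : ι → ℕ) i)

theorem tsum_tsum_dyadic_le {ι : Type*} [Fintype ι] [Nonempty ι] {a ε r0 : ℝ} (ha1 : a < 1)
    (hε : 0 < ε) (hr0 : 0 < r0) :
    ∑' m : {m : ℕ | r0⁻¹ ≤ 2 ^ m},
        ∑' k : {k : ι → ℕ | ∀ i, ((2 : ℝ) ^ (m : ℕ)) ^ (1 - a) ≤ 2 ^ k i},
          ENNReal.ofReal (∏ i, 3 * ((2 : ℝ) ^ (k : ι → ℕ) i) ^ (-ε)) ≤
      ENNReal.ofReal ((3 / (1 - 2 ^ (-ε))) ^ Fintype.card ι /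
          (1 - 2 ^ (-((Fintype.card ι : ℝ) * ε * (1 - a)))) *
        r0 ^ ((Fintype.card ι : ℝ) * ε * (1 - a))) := by
  set d := Fintype.card ι
  set ρ : ℝ := 2 ^ (-ε)
  set β : ℝ := d * ε * (1 - a)
  have hρ1 : ρ < 1 := Real.rpow_lt_one_of_one_lt_of_neg one_lt_two (neg_neg_of_pos hε)
  have hβ : 0 < β := mul_pos (mul_pos (Nat.cast_pos.2 Fintype.card_pos) hε) (sub_pos.2 ha1)
  calc _ ≤ ∑' m : {m : ℕ | r0⁻¹ ≤ 2 ^ m},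
          ENNReal.ofReal ((3 * (((2 : ℝ) ^ (m : ℕ)) ^ (1 - a)) ^ (-ε) / (1 - ρ)) ^ d) :=
        ENNReal.tsum_le_tsum fun m => tsum_pi_two_pow_rpow_neg_le hε (by positivity) (by norm_num)
    _ = ∑' m : {m : ℕ | r0⁻¹ ≤ 2 ^ m},
          ENNReal.ofReal ((3 / (1 - ρ)) ^ d * ((2 : ℝ) ^ (m : ℕ)) ^ (-β)) :=
        tsum_congr fun m => by
          have h2m : (0 : ℝ) ≤ 2 ^ (m : ℕ) := by positivity
          rw [div_pow, mul_pow, ← Real.rpow_mul h2m, ← Real.rpow_mul_natCast h2m,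
            show (1 - a) * -ε * d = -β by simp only [β]; ring]
          congr 1
          ring
    _ ≤ ENNReal.ofReal ((3 / (1 - ρ)) ^ d * r0⁻¹ ^ (-β) / (1 - 2 ^ (-β))) :=
        tsum_two_pow_rpow_neg_le hβ (inv_pos.2 hr0) (by have := sub_pos.2 hρ1; positivity)
    _ = _ := by
        rw [Real.inv_rpow hr0.le, Real.rpow_neg hr0.le, inv_inv]
        congr 1
        ring

theorem stmt1 {d : ℕ} (a ε : ℝ) (ha : 0 < a) (ha1 : a < 1) (hε : 0 < ε) :
    ∃ c0 : ℝ, ∀ ν : Measure (Fin d → ℝ), IsProbabilityMeasure ν →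
      ∀ r0 : ℝ, 0 < r0 → r0 ≤ 1 / 2 →
      ν {x | ∃ r : ℝ, ∃ h : Fin d → ℝ, 0 < r ∧ r < r0 ∧ (∀ i, r ^ a ≤ h i) ∧
          (∏ i, ENNReal.ofReal ((4 * h i / r) ^ (1 + ε))) *
            ν (univ.pi fun i => Icc (x i - r) (x i + r)) <
          ν (univ.pi fun i => Icc (x i - h i) (x i + h i))} ≤
        ENNReal.ofReal (c0 * r0 ^ ((d : ℝ) * ε * (1 - a))) := by
  rcases Nat.eq_zero_or_pos d with rfl | hd
  · refine ⟨0, fun ν _ r0 _ _ => ?_⟩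
    have hpi : ∀ f : Fin 0 → Set ℝ, univ.pi f = univ := fun f =>
      eq_univ_of_forall fun _ i => i.elim0
    simp [hpi]
  have : Nonempty (Fin d) := ⟨⟨0, hd⟩⟩
  refine ⟨(3 / (1 - 2 ^ (-ε))) ^ d / (1 - 2 ^ (-((d : ℝ) * ε * (1 - a)))),
    fun ν _ r0 hr0 hr0' => ?_⟩
  refine (measure_le_tsum_dyadic ν ha ha1.le (by linarith) hr0 (by linarith)).trans ?_
  simpa only [Fintype.card_fin] using tsum_tsum_dyadic_le (ι := Fin d) ha1 hε hr0
end

section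
/- Let $N$ be a standard normal random variable, let $\rho>0$, $a\geq 0$, $0<\beta<1$, and let $0<r<c$ where $c=2^{-1/(1-\beta)}$. Then $\mathbb{P}\big(\rho N \in [a-r, a+r]\big) \leq C\, r^{\beta} (a+\rho^{\beta})^{-1}$ for some absolute constant $C$ (independent of $\rho$, $a$, $\beta$, $r$). -/
/-!
Write `p` for the probability and `t = a / ρ`. Bounding the standard normal density by `1/2`
gives `p ≤ min 1 (r / ρ) ≤ (r / ρ) ^ β`, hence `p ρ^β ≤ r^β`. When `a ≥ 2r` the window lies to the
right of `t / 2`, where the density is at most `e^{-t²/8} / 2`, so `p a ≤ r t e^{-t²/8} ≤ 2r`; when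
`a < 2r` trivially `p a ≤ 2r`. As `r < c < 1` we have `r ≤ r^β`, so `p (a + ρ^β) ≤ 3 r^β`.
-/

open MeasureTheory ProbabilityTheory Real Set

lemma gaussianPDFReal_zero_one_le (x : ℝ) : gaussianPDFReal 0 1 x ≤ exp (-x ^ 2 / 2) / 2 := by
  have h_sqrt : 2 ≤ √(2 * π) := by
    nlinarith [sq_sqrt (by positivity : (0 : ℝ) ≤ 2 * π), sqrt_nonneg (2 * π), pi_gt_three]
  simp only [gaussianPDFReal, NNReal.coe_one, mul_one, sub_zero, div_eq_inv_mul]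
  gcongr

lemma gaussianReal_real_Icc_le {m : ℝ} {v : NNReal} (hv : v ≠ 0) {l u M : ℝ} (hlu : l ≤ u)
    (hM : ∀ x ∈ Icc l u, gaussianPDFReal m v x ≤ M) :
    (gaussianReal m v).real (Icc l u) ≤ (u - l) * M := by
  have hM0 : 0 ≤ M := (gaussianPDFReal_nonneg m v l).trans (hM l ⟨le_rfl, hlu⟩)
  refine ENNReal.toReal_le_of_le_ofReal (by positivity) ?_
  rw [gaussianReal_apply m hv]
  calc ∫⁻ x in Icc l u, gaussianPDF m v x
      ≤ ∫⁻ _ in Icc l u, ENNReal.ofReal M :=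
        setLIntegral_mono measurable_const fun x hx => ENNReal.ofReal_le_ofReal (hM x hx)
    _ = ENNReal.ofReal ((u - l) * M) := by
        rw [setLIntegral_const, volume_Icc, ← ENNReal.ofReal_mul hM0, mul_comm]

lemma gaussianReal_real_Icc_sub_add_le (c : ℝ) {h : ℝ} (hh : 0 ≤ h) :
    (gaussianReal 0 1).real (Icc (c - h) (c + h)) ≤ h := by
  refine (gaussianReal_real_Icc_le one_ne_zero (M := 1 / 2) (by linarith) fun x _ => ?_).trans_eq
    (by ring)
  refine (gaussianPDFReal_zero_one_le x).trans ?_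
  gcongr
  exact exp_le_one_iff.2 (by nlinarith [sq_nonneg x])

lemma gaussianReal_real_Icc_sub_add_le_of_two_mul_le {c h : ℝ} (hh : 0 ≤ h) (hhc : 2 * h ≤ c) :
    (gaussianReal 0 1).real (Icc (c - h) (c + h)) ≤ h * exp (-c ^ 2 / 8) := by
  refine (gaussianReal_real_Icc_le one_ne_zero (M := exp (-c ^ 2 / 8) / 2) (by linarith)
    fun x hx => ?_).trans_eq (by ring)
  refine (gaussianPDFReal_zero_one_le x).trans ?_
  gcongr exp ?_ / 2
  nlinarith [hx.1]

lemma mul_exp_neg_sq_div_eight_le (t : ℝ) : t * exp (-t ^ 2 / 8) ≤ 2 := by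
  have h_exp : t / 2 ≤ exp (t ^ 2 / 8) := by
    nlinarith [add_one_le_exp (t ^ 2 / 8), sq_nonneg (t - 2)]
  rw [neg_div, exp_neg, ← div_eq_mul_inv, div_le_iff₀ (exp_pos _)]
  linarith

lemma min_one_le_rpow {q β : ℝ} (hq : 0 ≤ q) (hβ0 : 0 ≤ β) (hβ1 : β ≤ 1) : min 1 q ≤ q ^ β := by
  rcases le_total q 1 with hq1 | hq1
  · exact (min_le_right _ _).trans (self_le_rpow_of_le_one hq hq1 hβ1)
  · exact (min_le_left _ _).trans (one_le_rpow hq1 hβ0)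

lemma mul_rpow_le_of_le_min {p r ρ β : ℝ} (hr : 0 ≤ r) (hρ : 0 < ρ) (hβ0 : 0 ≤ β)
    (hβ1 : β ≤ 1) (hp : p ≤ min 1 (r / ρ)) : p * ρ ^ β ≤ r ^ β :=
  calc p * ρ ^ β ≤ (r / ρ) ^ β * ρ ^ β := by
        gcongr; exact hp.trans (min_one_le_rpow (by positivity) hβ0 hβ1)
    _ = r ^ β := by rw [div_rpow hr hρ.le, div_mul_cancel₀ _ (rpow_pos_of_pos hρ β).ne']

lemma gaussianReal_real_Icc_div_mul_le {ρ a r : ℝ} (hρ : 0 < ρ) (hr : 0 ≤ r) :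
    (gaussianReal 0 1).real (Icc ((a - r) / ρ) ((a + r) / ρ)) * a ≤ 2 * r := by
  rw [sub_div, add_div]
  set p := (gaussianReal 0 1).real (Icc (a / ρ - r / ρ) (a / ρ + r / ρ))
  rcases le_total a (2 * r) with har | har
  · have hp0 : 0 ≤ p := measureReal_nonneg
    have hp1 : p ≤ 1 := measureReal_le_one
    nlinarith
  have ha : 0 ≤ a := (mul_nonneg zero_le_two hr).trans har
  have hp : p ≤ r / ρ * exp (-(a / ρ) ^ 2 / 8) :=
    gaussianReal_real_Icc_sub_add_le_of_two_mul_le (by positivity)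
      (by rw [← mul_div_assoc]; gcongr)
  calc p * a ≤ r / ρ * exp (-(a / ρ) ^ 2 / 8) * a := by gcongr
    _ = r * (a / ρ * exp (-(a / ρ) ^ 2 / 8)) := by field_simp
    _ ≤ r * 2 := by gcongr; exact mul_exp_neg_sq_div_eight_le _
    _ = 2 * r := mul_comm _ _

lemma gaussianReal_real_Icc_div_mul_rpow_le {ρ a r β : ℝ} (hρ : 0 < ρ) (hr : 0 ≤ r)
    (hβ0 : 0 ≤ β) (hβ1 : β ≤ 1) :
    (gaussianReal 0 1).real (Icc ((a - r) / ρ) ((a + r) / ρ)) * ρ ^ β ≤ r ^ β := by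
  refine mul_rpow_le_of_le_min hr hρ hβ0 hβ1 (le_min measureReal_le_one ?_)
  rw [sub_div, add_div]
  exact gaussianReal_real_Icc_sub_add_le _ (by positivity)

theorem stmt5 :
    ∃ C : ℝ, 0 < C ∧ ∀ ρ a β r : ℝ, 0 < ρ → 0 ≤ a → 0 < β → β < 1 →
      0 < r → r < (2 : ℝ) ^ (-(1 / (1 - β))) →
      (gaussianReal 0 1) {x | ρ * x ∈ Set.Icc (a - r) (a + r)} ≤
        ENNReal.ofReal (C * r ^ β / (a + ρ ^ β)) := by
  refine ⟨3, by norm_num, fun ρ a β r hρ ha hβ hβ1 hr hrc => ?_⟩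
  have hr1 : r ≤ 1 := hrc.le.trans (rpow_le_one_of_one_le_of_nonpos one_le_two
    (neg_nonpos.2 (one_div_nonneg.2 (by linarith))))
  have hden : 0 < a + ρ ^ β := by positivity
  change gaussianReal 0 1 ((fun x => ρ * x) ⁻¹' Icc (a - r) (a + r)) ≤ _
  rw [preimage_const_mul_Icc₀ _ _ hρ, ENNReal.le_ofReal_iff_toReal_le (measure_ne_top _ _)
    (by positivity), ← measureReal_def, le_div_iff₀ hden, mul_add]
  have h_a := gaussianReal_real_Icc_div_mul_le hρ hr.le (a := a)
  have h_ρ := gaussianReal_real_Icc_div_mul_rpow_le hρ hr.le hβ.le hβ1.le (a := a)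
  have h_rβ : r ≤ r ^ β := self_le_rpow_of_le_one hr.le hr1 hβ1.le
  linarith
end

section
/- Let $A\subset\mathbb{R}^n$ be an analytic set. Then $\Dim A = \sup\{\Dim K : K\subset A \text{ compact}\}$, where $\Dim$ denotes packing dimension. -/
open MeasureTheory Filter
open scoped ENNReal

/-- The covering number of `E` by closed balls of radius `r`. -/
noncomputable def covN {X : Type*} [PseudoMetricSpace X] (E : Set X) (r : ℝ) : ℕ∞ :=
  sInf ((fun S : Finset X => (S.card : ℕ∞)) ''
    {S | E ⊆ ⋃ x ∈ S, Metric.closedBall x r})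

/-- The upper Minkowski (box-counting) dimension of a set. -/
noncomputable def uMDim {X : Type*} [PseudoMetricSpace X] (E : Set X) : ℝ≥0∞ :=
  Filter.limsup (fun r : ℝ =>
      if covN E r = ⊤ then (⊤ : ℝ≥0∞)
      else ENNReal.ofReal (Real.log ((covN E r).toNat) / Real.log (1 / r)))
    (nhdsWithin 0 (Set.Ioi 0))

/-- The packing dimension of a set, via countable covers. -/
noncomputable def packDim {X : Type*} [PseudoMetricSpace X] (E : Set X) : ℝ≥0∞ :=
  ⨅ (c : ℕ → Set X) (_ : E ⊆ ⋃ i, c i), ⨆ i, uMDim (c i)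

/-- The packing dimension of a measure. -/
noncomputable def packDimMeasure {X : Type*} [PseudoMetricSpace X] [MeasurableSpace X]
    (μ : Measure X) : ℝ≥0∞ :=
  ⨅ (E : Set X) (_ : MeasurableSet E) (_ : 0 < μ E), packDim E

/-!
Write `A = f(ℕ^ℕ)` with `f` continuous and fix `α < Dim A`. Call a finite word `σ` good if
`f(cyl σ)` has packing dimension `> α`. There are only countably many bad words, so by countable
stability the image of their cylinders has packing dimension `≤ α`; hence for good `σ` the set
`f(cyl σ)` minus the bad part still has upper Minkowski dimension `> α`, i.e. at arbitrarily small
scales `r` it contains `r`-separated families of more than `r^{-α}` points. Each such point is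
`f y` with every prefix of `y` good, and continuity gives a long good prefix whose image lies
within `r/4` of the point. Iterating at scales below `2^{-m}` in depth `m` yields a finitely
branching tree of good words. The image `K` of its body is compact and lies in `A`; every
nonempty open piece of `K` contains the image of a whole subtree, and the separated families
chosen below it show that its covering numbers at the scales `s = r/4` exceed `(4s)^{-α}`. So every
open piece of `K` has upper Minkowski dimension `≥ α`, and Baire's theorem turns this into
`Dim K ≥ α`.
-/

namespace PackingDim

open Metric PiNat Topology

section CoveringNumbers

variable {X : Type*} [PseudoMetricSpace X] {E F : Set X} {r s δ : ℝ}

lemma covN_eq_externalCoveringNumber (E : Set X) (hr : 0 ≤ r) :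
    covN E r = externalCoveringNumber r.toNNReal E := by
  have hcover (C : Set X) : IsCover r.toNNReal E C ↔ E ⊆ ⋃ x ∈ C, closedBall x r := by
    rw [isCover_iff_subset_iUnion_closedBall, Real.coe_toNNReal r hr]
  refine le_antisymm (le_iInf₂ fun C hC => ?_) (le_sInf ?_)
  · rcases C.finite_or_infinite with hfin | hinf
    · have hS : E ⊆ ⋃ x ∈ hfin.toFinset, closedBall x r := by simpa using (hcover C).1 hC
      refine (sInf_le (Set.mem_image_of_mem _ hS)).trans_eq ?_
      rw [← Set.encard_coe_eq_coe_finsetCard, hfin.coe_toFinset]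
    · simp [hinf.encard_eq]
  · rintro _ ⟨S, hS, rfl⟩
    show _ ≤ ((S.card : ℕ) : ℕ∞)
    rw [← Set.encard_coe_eq_coe_finsetCard]
    exact iInf₂_le _ ((hcover S).2 (by simpa using hS))

lemma covN_le_of_forall_exists_dist_le (h : ∀ x ∈ E, ∃ y ∈ F, dist x y ≤ δ) :
    covN E (s + δ) ≤ covN F s := by
  refine le_sInf ?_
  rintro _ ⟨S, hS, rfl⟩
  refine sInf_le ⟨S, fun x hx => ?_, rfl⟩
  obtain ⟨y, hy, hxy⟩ := h x hx
  obtain ⟨z, hz, hyz⟩ := Set.mem_iUnion₂.1 (hS hy)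
  refine Set.mem_iUnion₂.2 ⟨z, hz, ?_⟩
  rw [mem_closedBall] at hyz ⊢
  linarith [dist_triangle x y z]

lemma covN_mono (h : E ⊆ F) (r : ℝ) : covN E r ≤ covN F r := by
  simpa using covN_le_of_forall_exists_dist_le (s := r) fun x hx => ⟨x, h hx, (dist_self x).le⟩

lemma covN_empty (r : ℝ) : covN (∅ : Set X) r = 0 :=
  nonpos_iff_eq_zero.1 (sInf_le ⟨∅, Set.empty_subset _, rfl⟩)

lemma covN_closure (E : Set X) (r : ℝ) : covN (closure E) r = covN E r := by
  have (S : Finset X) :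
      closure E ⊆ ⋃ x ∈ S, closedBall x r ↔ E ⊆ ⋃ x ∈ S, closedBall x r :=
    (S.finite_toSet.isClosed_biUnion fun _ _ => isClosed_closedBall).closure_subset_iff
  simp only [covN, this]

lemma card_le_covN_of_isSeparated {S : Finset X} (hSE : ↑S ⊆ E) (hs : 0 ≤ s)
    (hS : IsSeparated (ENNReal.ofReal (2 * s)) (S : Set X)) : (S.card : ℕ∞) ≤ covN E s := by
  rw [covN_eq_externalCoveringNumber E hs, ← Set.encard_coe_eq_coe_finsetCard]
  refine (IsSeparated.encard_le_packingNumber hSE ?_).trans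
    (packingNumber_two_mul_le_externalCoveringNumber _ _)
  simpa [ENNReal.ofReal, Real.toNNReal_mul zero_le_two] using hS

lemma exists_isSeparated_card_eq_of_le_covN (hr : 0 ≤ r) {k : ℕ}
    (hk : (k : ℕ∞) ≤ covN E r) :
    ∃ S : Finset X, ↑S ⊆ E ∧ IsSeparated (ENNReal.ofReal r) (S : Set X) ∧ S.card = k := by
  have hpack : (k : ℕ∞) ≤ packingNumber r.toNNReal E := by
    rw [covN_eq_externalCoveringNumber E hr] at hk
    exact hk.trans ((externalCoveringNumber_le_coveringNumber _ _).trans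
      (coveringNumber_le_packingNumber _ _))
  obtain ⟨C, hCE, hCsep, hkC⟩ :
      ∃ C ⊆ E, IsSeparated (ENNReal.ofReal r) C ∧ (k : ℕ∞) ≤ C.encard := by
    rcases k with _ | k
    · exact ⟨∅, Set.empty_subset _, .empty, zero_le⟩
    · obtain ⟨C, hC⟩ :=
        lt_iSup_iff.1 ((ENat.natCast_lt_natCast.2 k.lt_succ_self).trans_le hpack)
      obtain ⟨hCE, hC⟩ := lt_iSup_iff.1 hC
      obtain ⟨hCsep, hC⟩ := lt_iSup_iff.1 hC
      exact ⟨C, hCE, hCsep, Order.add_one_le_of_lt hC⟩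
  obtain ⟨t, htC, htk⟩ := Set.exists_subset_encard_eq hkC
  have ht : t.Finite := Set.finite_of_encard_eq_coe htk
  refine ⟨ht.toFinset, by simpa using htC.trans hCE, by simpa using hCsep.subset htC, ?_⟩
  rw [← ENat.natCast_inj, ← Set.encard_coe_eq_coe_finsetCard, ht.coe_toFinset, htk]

end CoveringNumbers

section MinkowskiDim

variable {X : Type*} [PseudoMetricSpace X] {E F : Set X} {r : ℝ}

noncomputable def covRatio (E : Set X) (r : ℝ) : ℝ≥0∞ :=
  if covN E r = ⊤ then ⊤ else ENNReal.ofReal (Real.log ((covN E r).toNat) / Real.log (1 / r))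

lemma uMDim_eq_limsup_covRatio (E : Set X) : uMDim E = limsup (covRatio E) (𝓝[>] 0) := rfl

lemma ofReal_lt_covRatio_iff {β : ℝ} (hβ : 0 ≤ β) (hr : r ∈ Set.Ioo 0 1) :
    ENNReal.ofReal β < covRatio E r ↔
      ∃ k : ℕ, (1 / r) ^ β < k ∧ (k : ℕ∞) ≤ covN E r := by
  rw [covRatio]
  split_ifs with htop
  · simp only [htop, ENNReal.ofReal_lt_top, le_top, and_true, true_iff]
    exact ⟨⌊(1 / r) ^ β⌋₊ + 1, by exact_mod_cast Nat.lt_floor_add_one _⟩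
  lift covN E r to ℕ using htop with N
  have hlog : 0 < Real.log (1 / r) := Real.log_pos (one_lt_one_div hr.1 hr.2)
  have hrpow : (1 / r) ^ β = Real.exp (β * Real.log (1 / r)) := by
    rw [Real.rpow_def_of_pos (one_div_pos.2 hr.1), mul_comm]
  rw [ENat.toNat_natCast, ENNReal.ofReal_lt_ofReal_iff_of_nonneg hβ, lt_div_iff₀ hlog]
  constructor
  · intro h
    have hN : 0 < (N : ℝ) := by
      by_contra! hN
      rw [Nat.cast_nonpos.1 hN, Nat.cast_zero, Real.log_zero] at h
      exact h.not_ge (by positivity)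
    exact ⟨N, by rwa [hrpow, ← Real.lt_log_iff_exp_lt hN], le_rfl⟩
  · rintro ⟨k, hk, hkN⟩
    have hkN : (k : ℝ) ≤ N := by exact_mod_cast hkN
    have hN : 0 < (N : ℝ) :=
      (Real.rpow_pos_of_pos (one_div_pos.2 hr.1) β).trans (hk.trans_le hkN)
    rw [Real.lt_log_iff_exp_lt hN, ← hrpow]
    exact hk.trans_le hkN

lemma covRatio_mono (h : E ⊆ F) (hr : r ∈ Set.Ioo 0 1) : covRatio E r ≤ covRatio F r := by
  refine le_of_forall_lt fun c hc => ?_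
  have hc' : ENNReal.ofReal c.toReal = c := ENNReal.ofReal_toReal hc.ne_top
  rw [← hc'] at hc ⊢
  obtain ⟨k, hk, hkE⟩ := (ofReal_lt_covRatio_iff ENNReal.toReal_nonneg hr).1 hc
  exact (ofReal_lt_covRatio_iff ENNReal.toReal_nonneg hr).2 ⟨k, hk, hkE.trans (covN_mono h r)⟩

lemma uMDim_mono (h : E ⊆ F) : uMDim E ≤ uMDim F := by
  rw [uMDim_eq_limsup_covRatio, uMDim_eq_limsup_covRatio]
  exact limsup_le_limsup (eventually_of_mem (Ioo_mem_nhdsGT one_pos) fun _ => covRatio_mono h)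

lemma uMDim_closure (E : Set X) : uMDim (closure E) = uMDim E := by
  simp only [uMDim, covN_closure]

lemma uMDim_empty : uMDim (∅ : Set X) = 0 := by
  simp [uMDim, covN_empty]

lemma frequently_lt_covN_of_ofReal_lt_uMDim {β : ℝ} (hβ : 0 ≤ β)
    (h : ENNReal.ofReal β < uMDim E) :
    ∃ᶠ r : ℝ in 𝓝[>] 0, ∃ k : ℕ, (1 / r) ^ β < k ∧ (k : ℕ∞) ≤ covN E r := by
  rw [uMDim_eq_limsup_covRatio] at h
  exact ((frequently_lt_of_lt_limsup (by isBoundedDefault) h).and_eventually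
    (Ioo_mem_nhdsGT one_pos)).mono fun _ ⟨hlt, hr⟩ => (ofReal_lt_covRatio_iff hβ hr).1 hlt

lemma eventually_rpow_lt_rpow_mul {α β C : ℝ} (hβα : β < α) (hC : 0 < C) :
    ∀ᶠ r in 𝓝[>] 0, (1 / r) ^ β < (1 / (C * r)) ^ α := by
  have hlim : Tendsto (fun r : ℝ => (1 / C) ^ α * (1 / r) ^ (α - β)) (𝓝[>] 0) atTop := by
    refine Tendsto.const_mul_atTop (by positivity) ?_
    simpa only [one_div, Function.comp_def] using
      (tendsto_rpow_atTop (sub_pos.2 hβα)).comp tendsto_inv_nhdsGT_zero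
  filter_upwards [hlim.eventually_gt_atTop 1, self_mem_nhdsWithin] with r hr hr0
  have hr0 : 0 < 1 / r := one_div_pos.2 hr0
  calc (1 / r) ^ β < (1 / r) ^ β * ((1 / C) ^ α * (1 / r) ^ (α - β)) :=
        lt_mul_of_one_lt_right (by positivity) hr
    _ = (1 / (C * r)) ^ α := by
        rw [mul_left_comm, ← Real.rpow_add hr0, add_sub_cancel,
          ← Real.mul_rpow (by positivity) hr0.le, one_div_mul_one_div]

lemma ofReal_le_uMDim_of_frequently {α C : ℝ} (hC : 0 < C)
    (h : ∃ᶠ r : ℝ in 𝓝[>] 0,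
      ∃ k : ℕ, (1 / (C * r)) ^ α ≤ k ∧ (k : ℕ∞) ≤ covN E r) :
    ENNReal.ofReal α ≤ uMDim E := by
  refine le_of_forall_lt_imp_le_of_dense fun c hc => ?_
  have hc' : ENNReal.ofReal c.toReal = c := ENNReal.ofReal_toReal hc.ne_top
  have hcα : c.toReal < α := by
    rwa [← hc', ENNReal.ofReal_lt_ofReal_iff_of_nonneg ENNReal.toReal_nonneg] at hc
  rw [← hc', uMDim_eq_limsup_covRatio]
  refine le_limsup_of_frequently_le ?_ (by isBoundedDefault)
  refine ((h.and_eventually (eventually_rpow_lt_rpow_mul hcα hC)).and_eventually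
    (Ioo_mem_nhdsGT one_pos)).mono fun r ⟨⟨⟨k, hk, hkE⟩, hlt⟩, hr⟩ => ?_
  exact ((ofReal_lt_covRatio_iff ENNReal.toReal_nonneg hr).2 ⟨k, hlt.trans_le hk, hkE⟩).le

end MinkowskiDim

section PackingDimension

variable {X : Type*} [PseudoMetricSpace X] {E F : Set X}

lemma packDim_mono (h : E ⊆ F) : packDim E ≤ packDim F :=
  le_iInf₂ fun c hc => iInf₂_le c (h.trans hc)

lemma packDim_le_uMDim (E : Set X) : packDim E ≤ uMDim E :=
  (iInf₂_le (fun _ => E) (Set.iUnion_const E).ge).trans_eq iSup_const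

lemma packDim_lt_iff {d : ℝ≥0∞} :
    packDim E < d ↔ ∃ c : ℕ → Set X, E ⊆ ⋃ i, c i ∧ ⨆ i, uMDim (c i) < d := by
  simp only [packDim, iInf_lt_iff, exists_prop]

lemma packDim_iUnion_le {ι : Type*} [Countable ι] (A : ι → Set X) :
    packDim (⋃ i, A i) ≤ ⨆ i, packDim (A i) := by
  refine le_of_forall_gt fun d hd => ?_
  obtain ⟨d', hd', hd'd⟩ := exists_between hd
  have hA (i : ι) := packDim_lt_iff.1 ((le_iSup (fun i => packDim (A i)) i).trans_lt hd')
  choose c hcA hcd using hA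
  rcases isEmpty_or_nonempty ι with hι | hι
  · rw [Set.iUnion_of_empty]
    exact ((packDim_le_uMDim (∅ : Set X)).trans_eq uMDim_empty).trans_lt (hd.trans_le' zero_le)
  obtain ⟨e, he⟩ := exists_surjective_nat (ι × ℕ)
  refine packDim_lt_iff.2 ⟨fun k => c (e k).1 (e k).2, fun x hx => ?_, ?_⟩
  · obtain ⟨i, hi⟩ := Set.mem_iUnion.1 hx
    obtain ⟨j, hj⟩ := Set.mem_iUnion.1 (hcA i hi)
    obtain ⟨k, hk⟩ := he (i, j)
    exact Set.mem_iUnion.2 ⟨k, by rwa [hk]⟩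
  · refine (iSup_le fun k => ?_).trans_lt hd'd
    exact (le_iSup (fun j => uMDim (c (e k).1 j)) _).trans (hcd _).le

lemma packDim_union_le (E F : Set X) : packDim (E ∪ F) ≤ max (packDim E) (packDim F) := by
  rw [Set.union_eq_iUnion]
  exact (packDim_iUnion_le _).trans
    (iSup_le (Bool.forall_bool.2 ⟨le_max_right _ _, le_max_left _ _⟩))

/-- By Baire's theorem some member of a countable cover of `K` is dense in an open piece of `K`,
and `uMDim` does not see the difference between a set and its closure. -/
lemma le_packDim_of_forall_isOpen {K : Set X} (hK : IsComplete K) (hne : K.Nonempty)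
    {d : ℝ≥0∞} (h : ∀ V, IsOpen V → (K ∩ V).Nonempty → d ≤ uMDim (K ∩ V)) :
    d ≤ packDim K := by
  refine le_iInf₂ fun c hc => ?_
  have : CompleteSpace K := hK.completeSpace_coe
  have : Nonempty K := hne.to_subtype
  obtain ⟨i, x, hx⟩ := nonempty_interior_of_iUnion_of_closed
    (f := fun i => (Subtype.val ⁻¹' closure (c i) : Set K))
    (fun i => isClosed_closure.preimage continuous_subtype_val)
    (Set.eq_univ_of_forall fun x => Set.mem_iUnion.2 <|
      (Set.mem_iUnion.1 (hc x.2)).imp fun _ hx => subset_closure hx)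
  obtain ⟨V, hV, hVK⟩ :=
    isOpen_induced_iff.1 (isOpen_interior (s := Subtype.val ⁻¹' closure (c i)))
  have hKV : K ∩ V ⊆ closure (c i) := fun z hz =>
    interior_subset (s := Subtype.val ⁻¹' closure (c i))
      (hVK ▸ hz.2 : (⟨z, hz.1⟩ : K) ∈ _)
  calc d ≤ uMDim (K ∩ V) := h V hV ⟨x, x.2, (hVK ▸ hx : x ∈ Subtype.val ⁻¹' V)⟩
    _ ≤ uMDim (closure (c i)) := uMDim_mono hKV
    _ = uMDim (c i) := uMDim_closure _
    _ ≤ ⨆ j, uMDim (c j) := le_iSup (fun j => uMDim (c j)) i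

end PackingDimension

section Cylinders

def cyl (σ : List ℕ) : Set (ℕ → ℕ) := cylinder (fun i => σ.getD i 0) σ.length

def prefixOf (y : ℕ → ℕ) (n : ℕ) : List ℕ := List.ofFn fun i : Fin n => y i

lemma getD_mem_cyl (σ : List ℕ) : (fun i => σ.getD i 0) ∈ cyl σ := self_mem_cylinder _ _

lemma isClosed_cyl (σ : List ℕ) : IsClosed (cyl σ) := by
  rw [cyl, cylinder_eq_pi]
  exact isClosed_set_pi fun _ _ => isClosed_singleton

lemma cyl_eq_cylinder_of_mem {σ : List ℕ} {y : ℕ → ℕ} (hy : y ∈ cyl σ) :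
    cyl σ = cylinder y σ.length :=
  (mem_cylinder_iff_eq.1 hy).symm

lemma length_prefixOf (y : ℕ → ℕ) (n : ℕ) : (prefixOf y n).length = n := List.length_ofFn

lemma cyl_prefixOf (y : ℕ → ℕ) (n : ℕ) : cyl (prefixOf y n) = cylinder y n := by
  have hy : y ∈ cyl (prefixOf y n) := mem_cylinder_iff.2 fun i hi => by
    rw [List.getD_eq_getElem _ _ hi]
    simp [prefixOf]
  rw [cyl_eq_cylinder_of_mem hy, length_prefixOf]

lemma cyl_prefixOf_subset {σ : List ℕ} {y : ℕ → ℕ} (hy : y ∈ cyl σ) {n : ℕ}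
    (hn : σ.length ≤ n) :
    cyl (prefixOf y n) ⊆ cyl σ := by
  rw [cyl_prefixOf, cyl_eq_cylinder_of_mem hy]
  exact cylinder_anti y hn

lemma eventually_cylinder_subset {y : ℕ → ℕ} {U : Set (ℕ → ℕ)} (hU : U ∈ 𝓝 y) :
    ∀ᶠ n in atTop, cylinder y n ⊆ U := by
  obtain ⟨_, ⟨x, n, rfl⟩, hy, hxU⟩ :=
    (isTopologicalBasis_cylinders fun _ => ℕ).mem_nhds_iff.1 hU
  exact eventually_atTop.2
    ⟨n, fun k hk => (cylinder_anti y hk).trans (mem_cylinder_iff_eq.1 hy ▸ hxU)⟩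

lemma exists_forall_mem_cyl {c : ℕ → List ℕ} (hc : Antitone (cyl ∘ c))
    (hlen : ∀ k, k ≤ (c k).length) : ∃ y, ∀ k, y ∈ cyl (c k) := by
  have hgetD {j k : ℕ} (hjk : j ≤ k) {i : ℕ} (hi : i < (c j).length) :
      (c k).getD i 0 = (c j).getD i 0 :=
    mem_cylinder_iff.1 (hc hjk (getD_mem_cyl (c k))) i hi
  refine ⟨fun i => (c (i + 1)).getD i 0, fun k => mem_cylinder_iff.2 fun i hi => ?_⟩
  rcases le_total (i + 1) k with hik | hki
  · exact (hgetD hik (Nat.lt_of_lt_of_le i.lt_succ_self (hlen _))).symm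
  · exact hgetD hki hi

end Cylinders

section Trees

def levels (ch : List ℕ → ℕ → Finset (List ℕ)) : ℕ → Finset (List ℕ)
  | 0 => {[]}
  | m + 1 => (levels ch m).biUnion fun σ => ch σ m

def body (ch : List ℕ → ℕ → Finset (List ℕ)) : Set (ℕ → ℕ) :=
  ⋂ m, ⋃ σ ∈ levels ch m, cyl σ

def IsRefining (ch : List ℕ → ℕ → Finset (List ℕ)) : Prop :=
  ∀ m, ∀ σ ∈ levels ch m,
    (ch σ m).Nonempty ∧ ∀ τ ∈ ch σ m, σ.length < τ.length ∧ cyl τ ⊆ cyl σ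

variable {ch : List ℕ → ℕ → Finset (List ℕ)} {m : ℕ} {σ τ : List ℕ}

lemma mem_levels_succ : τ ∈ levels ch (m + 1) ↔ ∃ σ ∈ levels ch m, τ ∈ ch σ m :=
  Finset.mem_biUnion

lemma le_length_of_mem_levels (hch : IsRefining ch) (hσ : σ ∈ levels ch m) :
    m ≤ σ.length := by
  induction m generalizing σ with
  | zero => exact Nat.zero_le _
  | succ m ih =>
    obtain ⟨π, hπ, hσπ⟩ := mem_levels_succ.1 hσ
    exact (ih hπ).trans_lt ((hch m π hπ).2 σ hσπ).1

lemma antitone_iUnion_cyl_levels (hch : IsRefining ch) :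
    Antitone fun m => ⋃ σ ∈ levels ch m, cyl σ := by
  refine antitone_nat_of_succ_le fun m => Set.iUnion₂_subset fun τ hτ => ?_
  obtain ⟨σ, hσ, hτσ⟩ := mem_levels_succ.1 hτ
  exact ((hch m σ hσ).2 τ hτσ).2.trans (Set.subset_biUnion_of_mem hσ)

lemma isCompact_body (hch : IsRefining ch) : IsCompact (body ch) := by
  let F (i : ℕ) : Set ℕ := (levels ch (i + 1)).image fun σ => σ.getD i 0
  refine (isCompact_univ_pi fun i => (F i).toFinite.isCompact).of_isClosed_subset
    (isClosed_iInter fun m =>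
      (levels ch m).finite_toSet.isClosed_biUnion fun σ _ => isClosed_cyl σ)
    fun y hy => Set.mem_univ_pi.2 fun i => ?_
  obtain ⟨σ, hσ, hyσ⟩ := Set.mem_iUnion₂.1 (Set.mem_iInter.1 hy (i + 1))
  exact Finset.mem_image.2
    ⟨σ, hσ, (mem_cylinder_iff.1 hyσ i (le_length_of_mem_levels hch hσ)).symm⟩

lemma exists_chain (hch : IsRefining ch) (hσ : σ ∈ levels ch m) :
    ∃ c : ℕ → List ℕ, c 0 = σ ∧ (∀ k, c k ∈ levels ch (m + k)) ∧ Antitone (cyl ∘ c) := by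
  have hnext (k : ℕ) (π : List ℕ) :
      ∃ π', π ∈ levels ch k → π' ∈ levels ch (k + 1) ∧ cyl π' ⊆ cyl π := by
    by_cases hπ : π ∈ levels ch k
    · obtain ⟨π', hπ'⟩ := (hch k π hπ).1
      exact ⟨π', fun _ => ⟨mem_levels_succ.2 ⟨π, hπ, hπ'⟩, ((hch k π hπ).2 π' hπ').2⟩⟩
    · exact ⟨π, fun h => absurd h hπ⟩
  choose next hnext using hnext
  let c (k : ℕ) : List ℕ := Nat.rec σ (fun k π => next (m + k) π) k
  have hc (k : ℕ) : c k ∈ levels ch (m + k) := by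
    induction k with
    | zero => exact hσ
    | succ k ih => exact (hnext (m + k) (c k) ih).1
  exact ⟨c, rfl, hc, antitone_nat_of_succ_le fun k => (hnext (m + k) (c k) (hc k)).2⟩

lemma body_inter_cyl_nonempty (hch : IsRefining ch) (hσ : σ ∈ levels ch m) :
    (body ch ∩ cyl σ).Nonempty := by
  obtain ⟨c, rfl, hc, hanti⟩ := exists_chain hch hσ
  obtain ⟨y, hy⟩ := exists_forall_mem_cyl hanti fun k =>
    (Nat.le_add_left k m).trans (le_length_of_mem_levels hch (hc k))
  refine ⟨y, Set.mem_iInter.2 fun j => ?_, hy 0⟩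
  exact antitone_iUnion_cyl_levels hch (Nat.le_add_left j m) (Set.mem_biUnion (hc j) (hy j))

end Trees

section Construction

variable {X : Type*} [PseudoMetricSpace X] (f : (ℕ → ℕ) → X) (α : ℝ)

def IsGood (σ : List ℕ) : Prop := ENNReal.ofReal α < packDim (f '' cyl σ)

def badSet : Set X := ⋃ σ : {σ : List ℕ // ¬IsGood f α σ}, f '' cyl σ

structure Refinement (σ : List ℕ) (m : ℕ) where
  scale : ℝ
  centers : Finset X
  child : X → List ℕ
  scale_pos : 0 < scale
  scale_lt : scale < (1 / 2) ^ m
  isSeparated : IsSeparated (ENNReal.ofReal scale) (centers : Set X)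
  rpow_lt_card : (1 / scale) ^ α < centers.card
  isGood_child : ∀ x ∈ centers, IsGood f α (child x)
  length_lt : ∀ x ∈ centers, σ.length < (child x).length
  cyl_child_subset : ∀ x ∈ centers, cyl (child x) ⊆ cyl σ
  image_child_subset : ∀ x ∈ centers, f '' cyl (child x) ⊆ closedBall x (scale / 4)

open Classical in
/-- Empty at words admitting no refinement, which by `nonempty_refinement` are never good. -/
noncomputable def children (σ : List ℕ) (m : ℕ) : Finset (List ℕ) :=
  if h : Nonempty (Refinement f α σ m) then h.some.centers.image h.some.child else ∅

variable {f α} {σ τ : List ℕ} {m : ℕ}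

lemma packDim_badSet_le : packDim (badSet f α) ≤ ENNReal.ofReal α :=
  (packDim_iUnion_le _).trans (iSup_le fun σ => not_lt.1 σ.2)

lemma ofReal_lt_uMDim_diff_badSet (hσ : IsGood f α σ) :
    ENNReal.ofReal α < uMDim (f '' cyl σ \ badSet f α) := by
  refine lt_of_lt_of_le ?_ (packDim_le_uMDim _)
  by_contra! h
  have hcover : f '' cyl σ ⊆ (f '' cyl σ \ badSet f α) ∪ badSet f α := by
    simp
  exact hσ.not_ge ((packDim_mono hcover).trans ((packDim_union_le _ _).trans
    (max_le h packDim_badSet_le)))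

lemma exists_isGood_image_subset_closedBall (hf : Continuous f) {x : X}
    (hx : x ∈ f '' cyl σ \ badSet f α) {δ : ℝ} (hδ : 0 < δ) :
    ∃ τ, IsGood f α τ ∧ σ.length < τ.length ∧ cyl τ ⊆ cyl σ ∧
      f '' cyl τ ⊆ closedBall x δ := by
  obtain ⟨⟨y, hyσ, rfl⟩, hbad⟩ := hx
  have hgood (n : ℕ) : IsGood f α (prefixOf y n) := by
    by_contra h
    exact hbad (Set.mem_iUnion.2
      ⟨⟨prefixOf y n, h⟩, y, cyl_prefixOf y n ▸ self_mem_cylinder y n, rfl⟩)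
  obtain ⟨n, hn, hsub⟩ := ((eventually_gt_atTop σ.length).and
    (eventually_cylinder_subset (hf.continuousAt.preimage_mem_nhds
      (closedBall_mem_nhds (f y) hδ)))).exists
  refine ⟨prefixOf y n, hgood n, (length_prefixOf y n).symm ▸ hn,
    cyl_prefixOf_subset hyσ hn.le, ?_⟩
  rw [cyl_prefixOf, Set.image_subset_iff]
  exact hsub

lemma nonempty_refinement (hf : Continuous f) (hα : 0 ≤ α) (hσ : IsGood f α σ) (m : ℕ) :
    Nonempty (Refinement f α σ m) := by
  obtain ⟨r, ⟨k, hk, hkE⟩, hr0, hrm⟩ := ((frequently_lt_covN_of_ofReal_lt_uMDim hα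
    (ofReal_lt_uMDim_diff_badSet hσ)).and_eventually
      (Ioo_mem_nhdsGT (by positivity : (0 : ℝ) < (1 / 2) ^ m))).exists
  obtain ⟨S, hSE, hSsep, rfl⟩ := exists_isSeparated_card_eq_of_le_covN hr0.le hkE
  have hchild (x : X) : ∃ τ, x ∈ S →
      IsGood f α τ ∧ σ.length < τ.length ∧ cyl τ ⊆ cyl σ ∧ f '' cyl τ ⊆ closedBall x (r / 4) := by
    by_cases hx : x ∈ S
    · exact (exists_isGood_image_subset_closedBall hf (hSE hx) (by positivity)).imp fun _ h _ => h
    · exact ⟨[], fun h => absurd h hx⟩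
  choose g hg using hchild
  exact ⟨⟨r, S, g, hr0, hrm, hSsep, hk, fun x hx => (hg x hx).1, fun x hx => (hg x hx).2.1,
    fun x hx => (hg x hx).2.2.1, fun x hx => (hg x hx).2.2.2⟩⟩

lemma Refinement.centers_nonempty (R : Refinement f α σ m) : R.centers.Nonempty := by
  refine Finset.card_pos.1 ?_
  exact_mod_cast (Real.rpow_pos_of_pos (one_div_pos.2 R.scale_pos) α).trans R.rpow_lt_card

lemma children_eq (h : Nonempty (Refinement f α σ m)) :
    children f α σ m = h.some.centers.image h.some.child :=
  dif_pos h

lemma exists_of_mem_children (hτ : τ ∈ children f α σ m) :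
    ∃ R : Refinement f α σ m, ∃ x ∈ R.centers, R.child x = τ := by
  unfold children at hτ
  split_ifs at hτ with h
  · exact ⟨h.some, Finset.mem_image.1 hτ⟩
  · exact absurd hτ (Finset.notMem_empty τ)

lemma isGood_of_mem_levels (hroot : IsGood f α []) (hσ : σ ∈ levels (children f α) m) :
    IsGood f α σ := by
  cases m with
  | zero => rwa [Finset.mem_singleton.1 hσ]
  | succ m =>
    obtain ⟨π, -, hσπ⟩ := mem_levels_succ.1 hσ
    obtain ⟨R, x, hx, rfl⟩ := exists_of_mem_children hσπ
    exact R.isGood_child x hx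

lemma isRefining_children (hf : Continuous f) (hα : 0 ≤ α) (hroot : IsGood f α []) :
    IsRefining (children f α) := by
  intro m σ hσ
  refine ⟨?_, fun τ hτ => ?_⟩
  · have h := nonempty_refinement hf hα (isGood_of_mem_levels hroot hσ) m
    rw [children_eq h]
    exact h.some.centers_nonempty.image _
  · obtain ⟨R, x, hx, rfl⟩ := exists_of_mem_children hτ
    exact ⟨R.length_lt x hx, R.cyl_child_subset x hx⟩

lemma exists_mem_levels_image_subset_ball {y : ℕ → ℕ} (hy : y ∈ body (children f α))
    {ε : ℝ} (hε : 0 < ε) :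
    ∃ m, ∃ σ ∈ levels (children f α) m, y ∈ cyl σ ∧ f '' cyl σ ⊆ ball (f y) ε := by
  obtain ⟨N, hN⟩ := exists_pow_lt_of_lt_one hε (by norm_num : (1 / 2 : ℝ) < 1)
  obtain ⟨σ, hσ, hyσ⟩ := Set.mem_iUnion₂.1 (Set.mem_iInter.1 hy (N + 1))
  obtain ⟨π, -, hσπ⟩ := mem_levels_succ.1 hσ
  obtain ⟨R, x, hx, rfl⟩ := exists_of_mem_children hσπ
  refine ⟨N + 1, _, hσ, hyσ, fun z hz => ?_⟩
  have hzx := R.image_child_subset x hx hz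
  have hyx := R.image_child_subset x hx ⟨y, hyσ, rfl⟩
  rw [mem_closedBall] at hzx hyx
  rw [mem_ball]
  linarith [dist_triangle_right z (f y) x, R.scale_lt]

lemma ofReal_le_uMDim_image_body_inter_cyl (hf : Continuous f) (hα : 0 ≤ α)
    (hroot : IsGood f α []) (hσ : σ ∈ levels (children f α) m) :
    ENNReal.ofReal α ≤ uMDim (f '' (body (children f α) ∩ cyl σ)) := by
  have hch := isRefining_children hf hα hroot
  obtain ⟨c, rfl, hc, hanti⟩ := exists_chain hch hσ
  refine ofReal_le_uMDim_of_frequently four_pos (frequently_iff.2 fun hU => ?_)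
  obtain ⟨ρ, hρ, hρU⟩ := mem_nhdsGT_iff_exists_Ioo_subset.1 hU
  obtain ⟨k, hk⟩ := exists_pow_lt_of_lt_one hρ (by norm_num : (1 / 2 : ℝ) < 1)
  have h := nonempty_refinement hf hα (isGood_of_mem_levels hroot (hc k)) (m + k)
  let R := h.some
  have hs : R.scale / 4 < ρ := calc
    R.scale / 4 < R.scale := by linarith [R.scale_pos]
    _ < (1 / 2) ^ (m + k) := R.scale_lt
    _ ≤ (1 / 2) ^ k := pow_le_pow_of_le_one (by norm_num) (by norm_num) (Nat.le_add_left k m)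
    _ < ρ := hk
  refine ⟨R.scale / 4, hρU ⟨by linarith [R.scale_pos], hs⟩, R.centers.card, ?_, ?_⟩
  · rw [mul_div_cancel₀ _ four_ne_zero]
    exact R.rpow_lt_card.le
  have hnear (x : X) (hx : x ∈ R.centers) :
      ∃ p ∈ f '' (body (children f α) ∩ cyl (c 0)), dist x p ≤ R.scale / 4 := by
    have hchild : R.child x ∈ levels (children f α) (m + k + 1) :=
      mem_levels_succ.2 ⟨c k, hc k, children_eq h ▸ Finset.mem_image_of_mem _ hx⟩
    obtain ⟨y, hy, hyx⟩ := body_inter_cyl_nonempty hch hchild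
    refine ⟨f y, ⟨y, ⟨hy, hanti k.zero_le (R.cyl_child_subset x hx hyx)⟩, rfl⟩, ?_⟩
    rw [dist_comm, ← mem_closedBall]
    exact R.image_child_subset x hx ⟨y, hyx, rfl⟩
  calc (R.centers.card : ℕ∞) ≤ covN (R.centers : Set X) (R.scale / 4 + R.scale / 4) := by
        refine card_le_covN_of_isSeparated subset_rfl (by linarith [R.scale_pos]) ?_
        rw [show 2 * (R.scale / 4 + R.scale / 4) = R.scale by ring]
        exact R.isSeparated
    _ ≤ _ := covN_le_of_forall_exists_dist_le hnear

theorem exists_isCompact_subset_range_ofReal_le_packDim (hf : Continuous f) (hα : 0 ≤ α)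
    (h : ENNReal.ofReal α < packDim (Set.range f)) :
    ∃ K, IsCompact K ∧ K ⊆ Set.range f ∧ ENNReal.ofReal α ≤ packDim K := by
  have hroot : IsGood f α [] := by
    rwa [IsGood, cyl, List.length_nil, cylinder_zero, Set.image_univ]
  have hch := isRefining_children hf hα hroot
  have hK : IsCompact (f '' body (children f α)) := (isCompact_body hch).image hf
  refine ⟨_, hK, Set.image_subset_range _ _, le_packDim_of_forall_isOpen hK.isComplete ?_ ?_⟩
  · exact ((body_inter_cyl_nonempty hch (m := 0) (Finset.mem_singleton_self _)).mono
      Set.inter_subset_left).image f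
  rintro V hV ⟨_, ⟨y, hy, rfl⟩, hyV⟩
  obtain ⟨ε, hε, hεV⟩ := Metric.isOpen_iff.1 hV _ hyV
  obtain ⟨m, σ, hσ, -, hσε⟩ := exists_mem_levels_image_subset_ball hy hε
  refine (ofReal_le_uMDim_image_body_inter_cyl hf hα hroot hσ).trans (uMDim_mono ?_)
  exact Set.subset_inter (Set.image_mono Set.inter_subset_left)
    ((Set.image_mono Set.inter_subset_right).trans (hσε.trans hεV))

end Construction

section Analytic

variable {X : Type*} [PseudoMetricSpace X]

theorem packDim_range_le_iSup_isCompact {f : (ℕ → ℕ) → X} (hf : Continuous f) :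
    packDim (Set.range f) ≤
      ⨆ (K : Set X) (_ : IsCompact K ∧ K ⊆ Set.range f), packDim K := by
  refine le_of_forall_lt fun c hc => ?_
  obtain ⟨α, hα, hcα, hαf⟩ := ENNReal.lt_iff_exists_real_btwn.1 hc
  obtain ⟨K, hK, hKf, hαK⟩ := exists_isCompact_subset_range_ofReal_le_packDim hf hα hαf
  exact hcα.trans_le (hαK.trans (le_iSup₂_of_le K ⟨hK, hKf⟩ le_rfl))

theorem packDim_eq_iSup_isCompact_of_analyticSet {A : Set X} (hA : AnalyticSet A) :
    packDim A = ⨆ (K : Set X) (_ : IsCompact K ∧ K ⊆ A), packDim K := by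
  refine le_antisymm ?_ (iSup₂_le fun K hK => packDim_mono hK.2)
  rw [AnalyticSet] at hA
  rcases hA with rfl | ⟨f, hf, rfl⟩
  · exact le_iSup₂_of_le ∅ ⟨isCompact_empty, subset_rfl⟩ le_rfl
  · exact packDim_range_le_iSup_isCompact hf

end Analytic

end PackingDim

theorem stmt18 {n : ℕ} (A : Set (Fin n → ℝ)) (hA : MeasureTheory.AnalyticSet A) :
    packDim A = ⨆ (K : Set (Fin n → ℝ)) (_ : IsCompact K ∧ K ⊆ A), packDim K :=
  PackingDim.packDim_eq_iSup_isCompact_of_analyticSet hA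
end
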